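/- Let Y be a real normed space and f: ℓ∞(Γ) → Y a surjective phase-isometry. Then f is phase-equivalent to a linear isometry: there exists ε: ℓ∞(Γ) → {−1, 1} such that ε·f is a surjective linear isometry. -/

import Mathlib

/-!
For a coordinate `γ`, the phase condition gives `{‖f x ± f (t e_γ)‖} = {t ± x γ}` once
`t ≥ 2‖x‖`, so every norming functional of `f (t e_γ)` takes the value `± x γ` at `f x`; a
weak-* cluster point `φ_γ` of these functionals as `t → ∞` does so for all `x`. Normalised by
`φ_γ (f 1) = 1`, they assemble into a linear map `T : Y → ℓ∞(Γ)` with `|T (f x) γ| = |x γ|`,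
which is an isometry because `f` is norm preserving and onto.

Then `P = T ∘ f` is a phase-isometry of `ℓ∞(Γ)` fixing `1` and preserving the modulus of every
coordinate. If `P x` agreed with `x` at `γ` but not at `δ`, comparing `x` with the two-point
vector `w = ‖x‖ (sign (x γ) e_γ + sign (x δ) e_δ)` would carry this disagreement over to `w`,
while comparing `w` with `1` shows that `P` keeps or flips both coordinates of `w` together.
So `P x = ± x`, `T` is onto, and `T⁻¹` is the required isometry.
-/

open Filter
open scoped lp ENNReal

namespace Real

theorem abs_sub_mul_sign_le {a c : ℝ} (h : |a| ≤ c) : |a - c * sign a| ≤ c := by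
  rcases lt_trichotomy a 0 with ha | rfl | ha
  · rw [sign_of_neg ha, abs_of_neg ha] at *; rw [abs_le]; constructor <;> linarith
  · simpa using (abs_nonneg 0).trans h
  · rw [sign_of_pos ha, abs_of_pos ha] at *; rw [abs_le]; constructor <;> linarith

theorem lt_abs_add_mul_sign {a c : ℝ} (ha : a ≠ 0) (hc : 0 ≤ c) : c < |a + c * sign a| := by
  rcases ha.lt_or_gt with ha | ha
  · rw [sign_of_neg ha, abs_of_neg (by linarith)]; linarith
  · rw [sign_of_pos ha, abs_of_pos (by linarith)]; linarith

theorem abs_mul_sign {a c : ℝ} (ha : a ≠ 0) (hc : 0 ≤ c) : |c * sign a| = c := by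
  rcases ha.lt_or_gt with ha | ha
  · simp [sign_of_neg ha, abs_of_nonneg hc]
  · simp [sign_of_pos ha, abs_of_nonneg hc]

end Real

theorem eq_iff_eq_of_abs_sub_lt {a b a' b' : ℝ} (ha : |a'| = |a|) (hb : |b'| = |b|)
    (h : |a' - b'| < |a + b|) : (a' = a ↔ b' = b) := by
  rcases abs_eq_abs.1 ha with rfl | rfl <;> rcases abs_eq_abs.1 hb with rfl | rfl <;>
    grind [abs_neg, neg_add]

theorem not_eq_iff_eq_of_abs_add_lt {a b a' b' : ℝ} (ha : |a'| = |a|) (hb : |b'| = |b|)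
    (ha0 : a ≠ 0) (hb0 : b ≠ 0) (h : |a' + b'| < |a + b|) : ¬(a' = a ↔ b' = b) := by
  rcases abs_eq_abs.1 ha with rfl | rfl <;> rcases abs_eq_abs.1 hb with rfl | rfl <;>
    grind [abs_neg, neg_add]

theorem eq_iff_eq_of_abs_eq_of_eq_iff_eq {a b a' b' : ℝ} (ha : |a'| = |a|) (hb : |b'| = |b|)
    (hab : |a| = |b|) (ha0 : a ≠ 0) (h : a = b ↔ a' = b') : (a' = a ↔ b' = b) := by
  rcases abs_eq_abs.1 ha with rfl | rfl <;> rcases abs_eq_abs.1 hb with rfl | rfl <;>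
    rcases abs_eq_abs.1 hab with rfl | rfl <;> grind

def IsPhaseIsometry {E F : Type*} [SeminormedAddCommGroup E] [SeminormedAddCommGroup F]
    (f : E → F) : Prop :=
  ∀ x y, ({‖f x + f y‖, ‖f x - f y‖} : Set ℝ) = {‖x + y‖, ‖x - y‖}

namespace IsPhaseIsometry

variable {E F G : Type*} [SeminormedAddCommGroup E] [SeminormedAddCommGroup F]
  [SeminormedAddCommGroup G] {f : E → F}

theorem norm_map [NormedSpace ℝ E] [NormedSpace ℝ F] (hf : IsPhaseIsometry f) (x : E) :
    ‖f x‖ = ‖x‖ := by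
  have h := hf x x
  simp only [sub_self, norm_zero, ← two_smul ℝ, norm_smul, Real.norm_two] at h
  rcases Set.pair_eq_pair_iff.1 h with ⟨h, -⟩ | ⟨h, h'⟩ <;> linarith

theorem linearIsometry_comp {R : Type*} [Semiring R] [Module R F] [Module R G]
    (hf : IsPhaseIsometry f) (T : F →ₗᵢ[R] G) : IsPhaseIsometry (T ∘ f) := fun x y => by
  simpa only [Function.comp_apply, ← map_add, ← map_sub, T.norm_map] using hf x y

end IsPhaseIsometry

theorem StrongDual.exists_norm_le_mem_of_eventually_mem {𝕜 E ι : Type*}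
    [NontriviallyNormedField 𝕜] [ProperSpace 𝕜] [SeminormedAddCommGroup E] [NormedSpace 𝕜 E]
    {l : Filter ι} [l.NeBot] {ψ : ι → StrongDual 𝕜 E} {r : ℝ} (hψ : ∀ i, ‖ψ i‖ ≤ r) :
    ∃ φ : StrongDual 𝕜 E, ‖φ‖ ≤ r ∧
      ∀ (v : E) (s : Set 𝕜), IsClosed s → (∀ᶠ i in l, ψ i v ∈ s) → φ v ∈ s := by
  obtain ⟨φ, hφr, hφ⟩ := (WeakDual.isCompact_closedBall (𝕜 := 𝕜) (E := E) 0 r).exists_mapClusterPt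
    (u := fun i => StrongDual.toWeakDual (ψ i)) (f := l)
    (le_principal_iff.2 (mem_map.2 (univ_mem' fun i => by simpa using hψ i)))
  refine ⟨WeakDual.toStrongDual φ, by simpa using hφr, fun v s hs hev => ?_⟩
  exact hs.mem_of_mapClusterPt
    (hφ.continuousAt_comp (f := fun φ : WeakDual 𝕜 E => φ v)
      (WeakDual.eval_continuous v).continuousAt) hev

theorem StrongDual.apply_eq_or_eq_neg_of_pair_norm_eq {E : Type*} [SeminormedAddCommGroup E]
    [NormedSpace ℝ E] {ψ : StrongDual ℝ E} (hψ : ‖ψ‖ ≤ 1) {a b : E} {s t : ℝ} (hb : ψ b = t)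
    (h : ({‖a + b‖, ‖a - b‖} : Set ℝ) = {t + s, t - s}) : ψ a = s ∨ ψ a = -s := by
  have hle : ∀ v, ψ v ≤ ‖v‖ := fun v =>
    (le_abs_self _).trans (by simpa using ψ.le_of_opNorm_le hψ v)
  have hadd := hle (a + b)
  have hsub := hle (b - a)
  rw [map_add, hb] at hadd
  rw [map_sub, hb, norm_sub_rev] at hsub
  rcases Set.pair_eq_pair_iff.1 h with ⟨h₁, h₂⟩ | ⟨h₁, h₂⟩
  · left; linarith
  · right; linarith

namespace lp

theorem norm_eq_of_forall_norm_apply_eq {α : Type*} {E : α → Type*}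
    [∀ i, NormedAddCommGroup (E i)] {x y : lp E ∞} (h : ∀ i, ‖x i‖ = ‖y i‖) : ‖x‖ = ‖y‖ :=
  le_antisymm
    (norm_le_of_forall_le (norm_nonneg _) fun i =>
      (h i).le.trans (norm_apply_le_norm ENNReal.top_ne_zero y i))
    (norm_le_of_forall_le (norm_nonneg _) fun i =>
      (h i).ge.trans (norm_apply_le_norm ENNReal.top_ne_zero x i))

section Dual

variable {𝕜 E Γ : Type*} [NontriviallyNormedField 𝕜] [SeminormedAddCommGroup E]
  [NormedSpace 𝕜 E]

def ofDualFamily (φ : Γ → StrongDual 𝕜 E) {C : ℝ} (hφ : ∀ γ, ‖φ γ‖ ≤ C) :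
    E →ₗ[𝕜] ℓ^∞(Γ, 𝕜) where
  toFun v := ⟨fun γ => φ γ v, memℓp_infty ⟨C * ‖v‖, by
    rintro _ ⟨γ, rfl⟩; exact (φ γ).le_of_opNorm_le (hφ γ) v⟩⟩
  map_add' v w := lp.ext (funext fun γ => map_add (φ γ) v w)
  map_smul' c v := lp.ext (funext fun γ => map_smul (φ γ) c v)

@[simp]
theorem ofDualFamily_apply (φ : Γ → StrongDual 𝕜 E) {C : ℝ} (hφ : ∀ γ, ‖φ γ‖ ≤ C) (v : E)
    (γ : Γ) : ofDualFamily φ hφ v γ = φ γ v :=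
  rfl

end Dual

variable {Γ : Type*}

theorem abs_apply_le_norm (x : ℓ^∞(Γ, ℝ)) (β : Γ) : |x β| ≤ ‖x‖ :=
  norm_apply_le_norm ENNReal.top_ne_zero x β

theorem norm_sub_one_lt_of_support_subset_pair {y : ℓ^∞(Γ, ℝ)} {γ δ : Γ} {c : ℝ} (hc : 0 < c)
    (hγ : y γ = c) (hδ : y δ = c) (hy : ∀ β, β ≠ γ → β ≠ δ → y β = 0) : ‖y - 1‖ < 1 + c := by
  have hbound : ∀ β, ‖(y - 1) β‖ ≤ max |c - 1| 1 := fun β => by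
    simp only [coeFn_sub, infty_coeFn_one, Pi.sub_apply, Pi.one_apply, Real.norm_eq_abs]
    by_cases hβγ : β = γ
    · rw [hβγ, hγ]; exact le_max_left _ _
    by_cases hβδ : β = δ
    · rw [hβδ, hδ]; exact le_max_left _ _
    · simp [hy β hβγ hβδ]
  refine (norm_le_of_forall_le (le_max_of_le_right zero_le_one) hbound).trans_lt
    (max_lt (abs_lt.2 ⟨by linarith, by linarith⟩) (by linarith))

theorem le_norm_add_one_and_le_norm_sub_one {y : ℓ^∞(Γ, ℝ)} {γ δ : Γ} {c : ℝ}
    (hγ : y γ = c) (hδ : y δ = -c) : 1 + c ≤ ‖y + 1‖ ∧ 1 + c ≤ ‖y - 1‖ := by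
  have h₁ := abs_apply_le_norm (y + 1) γ
  have h₂ := abs_apply_le_norm (y - 1) δ
  simp only [coeFn_add, coeFn_sub, infty_coeFn_one, Pi.add_apply, Pi.sub_apply, Pi.one_apply,
    hγ, hδ] at h₁ h₂
  constructor
  · linarith [le_abs_self (c + 1)]
  · linarith [neg_abs_le (-c - 1)]

theorem apply_eq_apply_iff_min_norm_lt {y : ℓ^∞(Γ, ℝ)} {γ δ : Γ} {c : ℝ} (hc : 0 < c)
    (hγ : |y γ| = c) (hδ : |y δ| = c) (hy : ∀ β, β ≠ γ → β ≠ δ → y β = 0) :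
    y γ = y δ ↔ min ‖y + 1‖ ‖y - 1‖ < 1 + c := by
  have hneg : ‖-y - 1‖ = ‖y + 1‖ := by
    rw [← _root_.norm_neg (-y - 1), neg_sub, sub_neg_eq_add, add_comm]
  have hneg' : ‖-y + 1‖ = ‖y - 1‖ := by
    rw [← _root_.norm_neg (-y + 1), neg_add, neg_neg, sub_eq_add_neg]
  have hy' : ∀ β, β ≠ γ → β ≠ δ → (-y) β = 0 := fun β hβγ hβδ => by simp [hy β hβγ hβδ]
  constructor
  · intro h
    rcases (abs_eq hc.le).1 hγ with h' | h'
    · exact min_lt_of_right_lt (norm_sub_one_lt_of_support_subset_pair hc h' (h ▸ h') hy)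
    · refine min_lt_of_left_lt (hneg ▸ norm_sub_one_lt_of_support_subset_pair hc ?_ ?_ hy')
      · simp [h']
      · simp [← h, h']
  · contrapose!
    intro h
    have hδ' : y δ = -y γ := ((abs_eq_abs.1 (hδ.trans hγ.symm)).resolve_left (Ne.symm h))
    rcases (abs_eq hc.le).1 hγ with h' | h'
    · exact le_min_iff.2 (le_norm_add_one_and_le_norm_sub_one h' (by rw [hδ', h']))
    · obtain ⟨h₁, h₂⟩ := le_norm_add_one_and_le_norm_sub_one (y := -y) (γ := γ) (δ := δ)
        (c := c) (by simp [h']) (by simp [hδ', h'])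
      exact le_min_iff.2 ⟨hneg ▸ h₂, hneg' ▸ h₁⟩

variable [DecidableEq Γ]

theorem norm_add_single_of_two_mul_norm_le (x : ℓ^∞(Γ, ℝ)) (γ : Γ) {t : ℝ}
    (ht : 2 * ‖x‖ ≤ t) : ‖x + lp.single ∞ γ t‖ = t + x γ := by
  have hx := abs_apply_le_norm x
  have hxγ := abs_le.1 (hx γ)
  apply le_antisymm
  · refine norm_le_of_forall_le (by linarith) fun β => ?_
    simp only [coeFn_add, Pi.add_apply, lp.single_apply, Real.norm_eq_abs, abs_le]
    rcases eq_or_ne β γ with rfl | hβ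
    · rw [Pi.single_eq_same]; constructor <;> linarith
    · have := abs_le.1 (hx β)
      rw [Pi.single_eq_of_ne hβ]; constructor <;> linarith
  · have := abs_apply_le_norm (x + lp.single ∞ γ t) γ
    simp only [coeFn_add, Pi.add_apply, lp.single_apply, Pi.single_eq_same] at this
    linarith [le_abs_self (x γ + t)]

theorem pair_norm_add_sub_single (x : ℓ^∞(Γ, ℝ)) (γ : Γ) {t : ℝ} (ht : 2 * ‖x‖ ≤ t) :
    ({‖x + lp.single ∞ γ t‖, ‖x - lp.single ∞ γ t‖} : Set ℝ) = {t + x γ, t - x γ} := by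
  have hneg := norm_add_single_of_two_mul_norm_le (-x) γ (t := t) (by rwa [norm_neg])
  rw [← norm_neg, neg_add', neg_neg] at hneg
  rw [norm_add_single_of_two_mul_norm_le x γ ht, hneg]
  simp [sub_eq_add_neg]

end lp

section Coherence

variable {Γ : Type*} {P : ℓ^∞(Γ, ℝ) → ℓ^∞(Γ, ℝ)}

theorem IsPhaseIsometry.iff_iff_of_norm_sub_lt (hP : IsPhaseIsometry P)
    (habs : ∀ x β, |P x β| = |x β|) {x z : ℓ^∞(Γ, ℝ)} {γ δ : Γ}
    (hγ : ‖x - z‖ < |x γ + z γ|) (hδ : ‖x - z‖ < |x δ + z δ|) :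
    (P x γ = x γ ↔ P z γ = z γ) ↔ (P x δ = x δ ↔ P z δ = z δ) := by
  have hmem : ‖x - z‖ ∈ ({‖P x + P z‖, ‖P x - P z‖} : Set ℝ) := by rw [hP x z]; simp
  rcases hmem with h | h
  · have key : ∀ β, ‖x - z‖ < |x β + z β| → ¬(P x β = x β ↔ P z β = z β) := fun β hβ => by
      have hsub := lp.abs_apply_le_norm (x - z) β
      have hadd := lp.abs_apply_le_norm (P x + P z) β
      simp only [lp.coeFn_sub, lp.coeFn_add, Pi.sub_apply, Pi.add_apply] at hsub hadd
      refine not_eq_iff_eq_of_abs_add_lt (habs x β) (habs z β) ?_ ?_ (by linarith)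
      · intro h0; simp only [h0, zero_sub, abs_neg, zero_add] at hsub hβ; linarith
      · intro h0; simp only [h0, sub_zero, add_zero] at hsub hβ; linarith
    simp only [key γ hγ, key δ hδ]
  · have key : ∀ β, ‖x - z‖ < |x β + z β| → (P x β = x β ↔ P z β = z β) := fun β hβ => by
      have hsub := lp.abs_apply_le_norm (P x - P z) β
      simp only [lp.coeFn_sub, Pi.sub_apply] at hsub
      exact eq_iff_eq_of_abs_sub_lt (habs x β) (habs z β) (by rw [h] at hβ; linarith)
    simp only [key γ hγ, key δ hδ]

theorem IsPhaseIsometry.apply_eq_iff_apply_eq_of_support_subset_pair (hP : IsPhaseIsometry P)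
    (habs : ∀ x β, |P x β| = |x β|) (hP1 : P 1 = 1) {u : ℓ^∞(Γ, ℝ)} {γ δ : Γ} {c : ℝ}
    (hc : 0 < c) (hγ : |u γ| = c) (hδ : |u δ| = c) (hu : ∀ β, β ≠ γ → β ≠ δ → u β = 0) :
    (P u γ = u γ ↔ P u δ = u δ) := by
  have hPu : ∀ β, β ≠ γ → β ≠ δ → P u β = 0 := fun β hβγ hβδ =>
    abs_eq_zero.1 ((habs u β).trans (by rw [hu β hβγ hβδ, abs_zero]))
  have hmin : min ‖P u + 1‖ ‖P u - 1‖ = min ‖u + 1‖ ‖u - 1‖ := by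
    have h := hP u 1
    rw [hP1] at h
    rcases Set.pair_eq_pair_iff.1 h with ⟨h₁, h₂⟩ | ⟨h₁, h₂⟩ <;> rw [h₁, h₂]
    exact min_comm _ _
  refine eq_iff_eq_of_abs_eq_of_eq_iff_eq (habs u γ) (habs u δ) (hγ.trans hδ.symm)
    (fun h0 => hc.ne' (by rw [← hγ, h0, abs_zero])) ?_
  rw [lp.apply_eq_apply_iff_min_norm_lt hc hγ hδ hu,
    lp.apply_eq_apply_iff_min_norm_lt hc ((habs u γ).trans hγ) ((habs u δ).trans hδ) hPu, hmin]

theorem IsPhaseIsometry.eq_or_eq_neg_of_abs_apply_eq (hP : IsPhaseIsometry P)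
    (habs : ∀ x β, |P x β| = |x β|) (hP1 : P 1 = 1) (x : ℓ^∞(Γ, ℝ)) : P x = x ∨ P x = -x := by
  classical
  by_contra! h
  obtain ⟨δ, hδ⟩ : ∃ δ, P x δ ≠ x δ := by
    by_contra! h'; exact h.1 (lp.ext (funext h'))
  obtain ⟨γ, hγ⟩ : ∃ γ, P x γ ≠ -x γ := by
    by_contra! h'; exact h.2 (lp.ext (funext fun β => by simp [h' β]))
  have hPγ : P x γ = x γ := (abs_eq_abs.1 (habs x γ)).resolve_right hγ
  have hxγ : x γ ≠ 0 := fun h0 => hγ (by rw [hPγ, h0, neg_zero])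
  have hxδ : x δ ≠ 0 := fun h0 => hδ (by rw [h0, ← abs_eq_zero, habs, h0, abs_zero])
  have hγδ : γ ≠ δ := by rintro rfl; exact hδ hPγ
  have hc : 0 < ‖x‖ := (abs_pos.2 hxγ).trans_le (lp.abs_apply_le_norm x γ)
  set w : ℓ^∞(Γ, ℝ) := lp.single ∞ γ (‖x‖ * Real.sign (x γ)) + lp.single ∞ δ (‖x‖ * Real.sign (x δ))
  have hwγ : w γ = ‖x‖ * Real.sign (x γ) := by simp [w, hγδ.symm]
  have hwδ : w δ = ‖x‖ * Real.sign (x δ) := by simp [w, hγδ]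
  have hw : ∀ β, β ≠ γ → β ≠ δ → w β = 0 := fun β hβγ hβδ => by simp [w, hβγ, hβδ]
  have hxw : ‖x - w‖ ≤ ‖x‖ := by
    refine lp.norm_le_of_forall_le hc.le fun β => ?_
    simp only [lp.coeFn_sub, Pi.sub_apply, Real.norm_eq_abs]
    by_cases hβγ : β = γ
    · rw [hβγ, hwγ]; exact Real.abs_sub_mul_sign_le (lp.abs_apply_le_norm x γ)
    by_cases hβδ : β = δ
    · rw [hβδ, hwδ]; exact Real.abs_sub_mul_sign_le (lp.abs_apply_le_norm x δ)
    · rw [hw β hβγ hβδ, sub_zero]; exact lp.abs_apply_le_norm x β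
  have hstep := hP.iff_iff_of_norm_sub_lt habs
    (hxw.trans_lt (hwγ ▸ Real.lt_abs_add_mul_sign hxγ hc.le))
    (hxw.trans_lt (hwδ ▸ Real.lt_abs_add_mul_sign hxδ hc.le))
  have hpattern := hP.apply_eq_iff_apply_eq_of_support_subset_pair habs hP1 hc
    (hwγ ▸ Real.abs_mul_sign hxγ hc.le) (hwδ ▸ Real.abs_mul_sign hxδ hc.le) hw
  simp only [hPγ, hδ, true_iff, false_iff] at hstep
  tauto

end Coherence

theorem IsPhaseIsometry.exists_dual_apply_eq_or_eq_neg {Γ Y : Type*} [NormedAddCommGroup Y]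
    [NormedSpace ℝ Y] {f : ℓ^∞(Γ, ℝ) → Y} (hf : IsPhaseIsometry f) (γ : Γ) :
    ∃ φ : StrongDual ℝ Y, ‖φ‖ ≤ 1 ∧ ∀ x, φ (f x) = x γ ∨ φ (f x) = -x γ := by
  classical
  choose ψ hψ hψe using fun n : ℕ => exists_dual_vector'' ℝ (f (lp.single ∞ γ (n : ℝ)))
  obtain ⟨φ, hφ, hφx⟩ := StrongDual.exists_norm_le_mem_of_eventually_mem (l := atTop) hψ
  refine ⟨φ, hφ, fun x => hφx (f x) {x γ, -x γ} (Set.toFinite _).isClosed ?_⟩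
  filter_upwards [eventually_ge_atTop ⌈2 * ‖x‖⌉₊] with n hn
  refine StrongDual.apply_eq_or_eq_neg_of_pair_norm_eq (hψ n) ?_
    ((hf x _).trans (lp.pair_norm_add_sub_single x γ (Nat.ceil_le.1 hn)))
  simpa [hf.norm_map, lp.norm_single ENNReal.zero_lt_top] using hψe n

theorem IsPhaseIsometry.exists_dual_apply_one_eq_one {Γ Y : Type*} [NormedAddCommGroup Y]
    [NormedSpace ℝ Y] {f : ℓ^∞(Γ, ℝ) → Y} (hf : IsPhaseIsometry f) (γ : Γ) :
    ∃ φ : StrongDual ℝ Y, ‖φ‖ ≤ 1 ∧ φ (f 1) = 1 ∧ ∀ x, φ (f x) = x γ ∨ φ (f x) = -x γ := by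
  obtain ⟨φ, hφ, hφx⟩ := hf.exists_dual_apply_eq_or_eq_neg γ
  have hsign : φ (f 1) = 1 ∨ φ (f 1) = -1 := by simpa using hφx 1
  have hsq : φ (f 1) * φ (f 1) = 1 := by rcases hsign with h | h <;> rw [h] <;> norm_num
  have habs : ‖φ (f 1)‖ = 1 := by rcases hsign with h | h <;> simp [h]
  refine ⟨φ (f 1) • φ, by rwa [norm_smul, habs, one_mul], by simpa using hsq, fun x => ?_⟩
  rcases hsign with h | h <;> rcases hφx x with h' | h' <;> simp [h, h']

theorem stmt_15 {Γ : Type*} {Y : Type*} [NormedAddCommGroup Y] [NormedSpace ℝ Y]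
    (f : lp (fun _ : Γ => ℝ) ⊤ → Y)
    (hf : ∀ x y : lp (fun _ : Γ => ℝ) ⊤,
      ({‖f x + f y‖, ‖f x - f y‖} : Set ℝ) = {‖x + y‖, ‖x - y‖})
    (hsurj : Function.Surjective f) :
    ∃ ε : lp (fun _ : Γ => ℝ) ⊤ → ℝ, (∀ x, ε x = 1 ∨ ε x = -1) ∧
      ∃ g : lp (fun _ : Γ => ℝ) ⊤ →ₗᵢ[ℝ] Y, Function.Surjective g ∧
        ∀ x, g x = ε x • f x := by
  classical
  have hf : IsPhaseIsometry f := hf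
  choose φ hφ hφ1 hφx using hf.exists_dual_apply_one_eq_one
  have habs : ∀ x γ, |lp.ofDualFamily φ hφ (f x) γ| = |x γ| := fun x γ => by
    rcases hφx γ x with h | h <;> simp [h]
  have hnorm : ∀ v, ‖lp.ofDualFamily φ hφ v‖ = ‖v‖ := fun v => by
    obtain ⟨x, rfl⟩ := hsurj v
    rw [hf.norm_map, lp.norm_eq_of_forall_norm_apply_eq (habs x)]
  let T : Y →ₗᵢ[ℝ] ℓ^∞(Γ, ℝ) := ⟨lp.ofDualFamily φ hφ, hnorm⟩
  have hT : ∀ x, T (f x) = x ∨ T (f x) = -x :=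
    (hf.linearIsometry_comp T).eq_or_eq_neg_of_abs_apply_eq habs
      (lp.ext (funext fun γ => (hφ1 γ).trans (by simp)))
  have hTsurj : Function.Surjective T := fun x =>
    (hT x).elim (fun h => ⟨f x, h⟩) (fun h => ⟨-f x, by rw [map_neg, h, neg_neg]⟩)
  let e := LinearIsometryEquiv.ofSurjective T hTsurj
  refine ⟨fun x => if T (f x) = x then 1 else -1, fun x => by beta_reduce; split_ifs <;> simp,
    e.symm.toLinearIsometry, e.symm.surjective, fun x => ?_⟩
  rw [LinearIsometryEquiv.coe_toLinearIsometry, LinearIsometryEquiv.symm_apply_eq]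
  show x = T ((if T (f x) = x then (1 : ℝ) else -1) • f x)
  split_ifs with h
  · rw [one_smul, h]
  · rw [map_smul, (hT x).resolve_left h, neg_one_smul, neg_neg]
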